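/- Let T^i > 0 and define p : ℝ → ℝ by p(Φ) = -√(e^{-Φ} + T^i e^{Φ/T^i} - 1 - T^i) for Φ ≥ 0 and p(Φ) = √(e^{-Φ} + T^i e^{Φ/T^i} - 1 - T^i) for Φ < 0. Then p is continuous, strictly decreasing on ℝ, p(0) = 0, p(Φ) → +∞ as Φ → -∞, and p(Φ) → -∞ as Φ → +∞. In particular, for every ψ ∈ ℝ there is a unique Φ with p(Φ) = ψ. -/

import Mathlib

open Real Filter

private lemma sqrt_tendsto_atTop : Filter.Tendsto Real.sqrt Filter.atTop Filter.atTop := by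
  rw [tendsto_atTop_atTop]
  intro b
  refine ⟨max 0 b ^ 2, fun x hx => ?_⟩
  calc b ≤ max 0 b := le_max_right 0 b
    _ = Real.sqrt (max 0 b ^ 2) := (Real.sqrt_sq (le_max_left 0 b)).symm
    _ ≤ Real.sqrt x := Real.sqrt_le_sqrt hx

/-- The stable-manifold branch `p(Φ) = ∓√(e^{-Φ} + Tᵢ e^{Φ/Tᵢ} - 1 - Tᵢ)` (sign according
to the sign of `Φ`) is continuous, strictly decreasing, vanishes at `0`, tends to `+∞` at
`-∞` and to `-∞` at `+∞`; in particular it takes every value `ψ ∈ ℝ` exactly once. -/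
theorem stmt_3 (Ti : ℝ) (hTi : 0 < Ti) (p : ℝ → ℝ)
    (hp : ∀ Φ : ℝ, p Φ =
      if 0 ≤ Φ then -Real.sqrt (Real.exp (-Φ) + Ti * Real.exp (Φ / Ti) - 1 - Ti)
      else Real.sqrt (Real.exp (-Φ) + Ti * Real.exp (Φ / Ti) - 1 - Ti)) :
    Continuous p ∧ StrictAnti p ∧ p 0 = 0 ∧
      Filter.Tendsto p Filter.atBot Filter.atTop ∧
      Filter.Tendsto p Filter.atTop Filter.atBot ∧
      ∀ ψ : ℝ, ∃! Φ : ℝ, p Φ = ψ := by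
  have hpf : p = fun Φ : ℝ =>
      if 0 ≤ Φ then -Real.sqrt (Real.exp (-Φ) + Ti * Real.exp (Φ / Ti) - 1 - Ti)
      else Real.sqrt (Real.exp (-Φ) + Ti * Real.exp (Φ / Ti) - 1 - Ti) := funext hp
  subst hpf
  set S : ℝ → ℝ := fun Φ => Real.exp (-Φ) + Ti * Real.exp (Φ / Ti) - 1 - Ti with hSdef
  have hS0 : S 0 = 0 := by simp [hSdef]
  have hScont : Continuous S := by fun_prop
  have hSd : ∀ x : ℝ, HasDerivAt S (Real.exp (x / Ti) - Real.exp (-x)) x := by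
    intro x
    have h1 : HasDerivAt (fun y : ℝ => Real.exp (-y)) (-Real.exp (-x)) x := by
      simpa [mul_comm, Function.comp_def] using (Real.hasDerivAt_exp (-x)).comp x (hasDerivAt_neg x)
    have h2 : HasDerivAt (fun y : ℝ => Real.exp (y / Ti)) (Real.exp (x / Ti) * (1 / Ti)) x := by
      exact (Real.hasDerivAt_exp (x / Ti)).comp x ((hasDerivAt_id x).div_const Ti)
    have h3 : HasDerivAt (fun y : ℝ => Ti * Real.exp (y / Ti))
        (Ti * (Real.exp (x / Ti) * (1 / Ti))) x := h2.const_mul Ti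
    have h4 := ((h1.add h3).sub_const 1).sub_const Ti
    refine h4.congr_deriv ?_
    field_simp [hTi.ne']
    ring
  have hMono : StrictMonoOn S (Set.Ici 0) := by
    apply strictMonoOn_of_deriv_pos (convex_Ici 0) hScont.continuousOn
    intro x hx
    rw [interior_Ici] at hx
    have hx' : 0 < x := hx
    rw [(hSd x).deriv]
    have : Real.exp (-x) < Real.exp (x / Ti) := by
      apply Real.exp_lt_exp.mpr
      have : 0 < x / Ti := div_pos hx' hTi
      linarith
    linarith
  have hAnti : StrictAntiOn S (Set.Iic 0) := by
    apply strictAntiOn_of_deriv_neg (convex_Iic 0) hScont.continuousOn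
    intro x hx
    rw [interior_Iic] at hx
    have hx' : x < 0 := hx
    rw [(hSd x).deriv]
    have : Real.exp (x / Ti) < Real.exp (-x) := by
      apply Real.exp_lt_exp.mpr
      have : x / Ti < 0 := div_neg_of_neg_of_pos hx' hTi
      linarith
    linarith
  have hpos : ∀ x : ℝ, x ≠ 0 → 0 < S x := by
    intro x hx
    rcases lt_or_gt_of_ne hx with h | h
    · have := hAnti (Set.mem_Iic.mpr h.le) (Set.mem_Iic.mpr le_rfl) h
      rw [hS0] at this; exact this
    · have := hMono (Set.mem_Ici.mpr le_rfl) (Set.mem_Ici.mpr h.le) h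
      rw [hS0] at this; exact this
  have hnonneg : ∀ x : ℝ, 0 ≤ S x := by
    intro x
    rcases eq_or_ne x 0 with h | h
    · rw [h, hS0]
    · exact (hpos x h).le
  set g : ℝ → ℝ := fun x => Real.sqrt (S x) with hgdef
  have hgcont : Continuous g := hScont.sqrt
  have key : (fun Φ : ℝ =>
      if 0 ≤ Φ then -Real.sqrt (Real.exp (-Φ) + Ti * Real.exp (Φ / Ti) - 1 - Ti)
      else Real.sqrt (Real.exp (-Φ) + Ti * Real.exp (Φ / Ti) - 1 - Ti)) =
      fun Φ : ℝ => if 0 ≤ Φ then -g Φ else g Φ := rfl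
  rw [key]
  have hcont : Continuous fun Φ : ℝ => if 0 ≤ Φ then -g Φ else g Φ := by
    apply Continuous.if_le hgcont.neg hgcont continuous_const continuous_id
    intro x hx
    have hx0 : x = 0 := hx.symm
    subst hx0
    simp [hgdef, hS0]
  have hanti : StrictAnti fun Φ : ℝ => if 0 ≤ Φ then -g Φ else g Φ := by
    intro a b hab
    dsimp only
    by_cases ha : 0 ≤ a
    · have hb : 0 ≤ b := le_trans ha hab.le
      rw [if_pos ha, if_pos hb]
      have : g a < g b := Real.sqrt_lt_sqrt (hnonneg a)
        (hMono (Set.mem_Ici.mpr ha) (Set.mem_Ici.mpr hb) hab)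
      linarith
    · have ha' : a < 0 := lt_of_not_ge ha
      rw [if_neg ha]
      have hga : 0 < g a := Real.sqrt_pos.mpr (hpos a ha'.ne)
      by_cases hb : 0 ≤ b
      · rw [if_pos hb]
        have : 0 ≤ g b := Real.sqrt_nonneg _
        linarith
      · have hb' : b < 0 := lt_of_not_ge hb
        rw [if_neg hb]
        exact Real.sqrt_lt_sqrt (hnonneg b)
          (hAnti (Set.mem_Iic.mpr ha'.le) (Set.mem_Iic.mpr hb'.le) hab)
  have hzero : (if (0:ℝ) ≤ 0 then -g 0 else g 0) = 0 := by
    rw [if_pos le_rfl]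
    simp [hgdef, hS0]
  have hSbot : Tendsto S atBot atTop := by
    have h := tendsto_atTop_add_const_right atBot (-1 - Ti)
      (Real.tendsto_exp_atTop.comp tendsto_neg_atBot_atTop)
    refine tendsto_atTop_mono (fun x => ?_) h
    have hx : 0 < Ti * Real.exp (x / Ti) := by positivity
    simp only [Function.comp, hSdef]
    linarith
  have hStop : Tendsto S atTop atTop := by
    have h := tendsto_atTop_add_const_right atTop (-1 - Ti)
      ((tendsto_const_mul_atTop_of_pos hTi).mpr
        (Real.tendsto_exp_atTop.comp (tendsto_id.atTop_div_const hTi)))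
    refine tendsto_atTop_mono (fun x => ?_) h
    have hx : 0 < Real.exp (-x) := Real.exp_pos _
    simp only [Function.comp, hSdef, id]
    linarith
  have hgbot : Tendsto g atBot atTop := sqrt_tendsto_atTop.comp hSbot
  have hgtop : Tendsto g atTop atTop := sqrt_tendsto_atTop.comp hStop
  have htbot : Tendsto (fun Φ : ℝ => if 0 ≤ Φ then -g Φ else g Φ) atBot atTop := by
    have he : g =ᶠ[atBot] fun Φ : ℝ => if 0 ≤ Φ then -g Φ else g Φ :=
      (Filter.eventually_lt_atBot (0:ℝ)).mono fun x hx => (if_neg (not_le.mpr hx)).symm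
    exact hgbot.congr' he
  have httop : Tendsto (fun Φ : ℝ => if 0 ≤ Φ then -g Φ else g Φ) atTop atBot := by
    have he : (fun Φ : ℝ => -g Φ) =ᶠ[atTop] fun Φ : ℝ => if 0 ≤ Φ then -g Φ else g Φ :=
      (Filter.eventually_ge_atTop (0:ℝ)).mono fun x hx => (if_pos hx).symm
    exact (tendsto_neg_atTop_atBot.comp hgtop).congr' he
  refine ⟨hcont, hanti, hzero, htbot, httop, fun ψ => ?_⟩
  obtain ⟨Φ, hΦ⟩ := hcont.surjective' htbot httop ψ
  exact ⟨Φ, hΦ, fun y hy => hanti.injective (hy.trans hΦ.symm)⟩
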